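/- If X is a nonzero Hermitian matrix with trace zero satisfying ‖X‖₂ = (1/√2)‖X‖₁, then X has exactly two nonzero eigenvalues, which are +t and −t for some t > 0; in particular rank(X) = 2. -/

import Mathlib

open Matrix Kronecker BigOperators
open scoped ComplexOrder

noncomputable def traceNorm {n : Type*} [Fintype n] [DecidableEq n] (X : Matrix n n ℂ) : ℝ :=
  (((Matrix.posSemidef_conjTranspose_mul_self X).1.eigenvectorUnitary.1 *
      diagonal (((↑) : ℝ → ℂ) ∘ Real.sqrt ∘ (Matrix.posSemidef_conjTranspose_mul_self X).1.eigenvalues) *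
      (star (Matrix.posSemidef_conjTranspose_mul_self X).1.eigenvectorUnitary : Matrix n n ℂ)).trace).re

noncomputable def hsNorm {n : Type*} [Fintype n] (X : Matrix n n ℂ) : ℝ :=
  Real.sqrt ((Xᴴ * X).trace.re)

noncomputable def singularValues {n : Type*} [Fintype n] [DecidableEq n] (Y : Matrix n n ℂ) :
    n → ℝ :=
  fun i => Real.sqrt ((Matrix.posSemidef_conjTranspose_mul_self Y).1.eigenvalues i)

/-- Partial transpose on the first tensor factor. -/
def ptransp {d k : ℕ} (X : Matrix (Fin d × Fin k) (Fin d × Fin k) ℂ) :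
    Matrix (Fin d × Fin k) (Fin d × Fin k) ℂ :=
  fun p q => X (q.1, p.2) (p.1, q.2)

/-- Partial trace over the first tensor factor. -/
noncomputable def ptraceH {d k : ℕ} (X : Matrix (Fin d × Fin k) (Fin d × Fin k) ℂ) :
    Matrix (Fin k) (Fin k) ℂ :=
  fun j j' => ∑ i, X (i, j) (i, j')

def vec {d : ℕ} (A : Matrix (Fin d) (Fin d) ℂ) : Fin d × Fin d → ℂ := fun p => A p.1 p.2

/-- Outer product |v⟩⟨w|. -/
def outer {n : Type*} (v w : n → ℂ) : Matrix n n ℂ := fun i j => v i * star (w j)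

/-- The swap operator F(e_i ⊗ e_j) = e_j ⊗ e_i. -/
def swapOp (d : ℕ) : Matrix (Fin d × Fin d) (Fin d × Fin d) ℂ :=
  fun p q => if p.1 = q.2 ∧ p.2 = q.1 then 1 else 0

/-- Blockwise action of Φ ⊗ id on operators on H ⊗ K. -/
def tensorExt {d k : ℕ} (Φ : Matrix (Fin d) (Fin d) ℂ → Matrix (Fin d) (Fin d) ℂ)
    (Z : Matrix (Fin d × Fin k) (Fin d × Fin k) ℂ) :
    Matrix (Fin d × Fin k) (Fin d × Fin k) ℂ :=
  fun p q => Φ (fun a b => Z (a, p.2) (b, q.2)) p.1 q.1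

/-- Diamond norm (stabilized at ancilla dimension d). -/
noncomputable def diamondNorm {d : ℕ}
    (Φ : Matrix (Fin d) (Fin d) ℂ → Matrix (Fin d) (Fin d) ℂ) : ℝ :=
  ⨆ ρ : {ρ : Matrix (Fin d × Fin d) (Fin d × Fin d) ℂ // ρ.PosSemidef ∧ ρ.trace = 1},
    traceNorm (tensorExt Φ ρ.1)

/-!
For Hermitian `X` with eigenvalues `μ`, `‖X‖₁ = ∑ |μᵢ|` and `‖X‖₂² = ∑ μᵢ²`. If `∑ μᵢ = 0`, the
positive and negative eigenvalues each carry half of `s = ∑ |μⱼ|`, so `|μᵢ| ≤ s / 2` and hence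
`∑ μᵢ² ≤ (s / 2) · s`. Equality forces every nonzero `|μᵢ|` to be `s / 2`, so exactly two
eigenvalues are nonzero, and as they sum to zero they are `t` and `-t`.
-/

open Finset

namespace Matrix

variable {n 𝕜 : Type*} [Fintype n] [DecidableEq n] [RCLike 𝕜]

lemma IsHermitian.trace_cfc {A : Matrix n n 𝕜} (hA : A.IsHermitian) (f : ℝ → ℝ) :
    (cfc f A).trace = ∑ i, (f (hA.eigenvalues i) : 𝕜) := by
  have hU : star (hA.eigenvectorUnitary : Matrix n n 𝕜) * hA.eigenvectorUnitary = 1 :=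
    Unitary.star_mul_self_of_mem hA.eigenvectorUnitary.2
  rw [hA.cfc_eq, IsHermitian.cfc, Unitary.conjStarAlgAut_apply, trace_mul_cycle, hU, one_mul,
    trace_diagonal]
  rfl

open scoped MatrixOrder in
lemma traceNorm_eq_re_trace_abs (X : Matrix n n ℂ) : traceNorm X = (CFC.abs X).trace.re := by
  have hXX : (star X * X).PosSemidef := posSemidef_conjTranspose_mul_self X
  rw [traceNorm, CFC.abs, CFC.sqrt_eq_cfc,
    cfc_nnreal_eq_real _ _ hXX.nonneg, hXX.1.cfc_eq, IsHermitian.cfc, Unitary.conjStarAlgAut_apply]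
  congr 5 with i
  simp [Real.coe_toNNReal', hXX.eigenvalues_nonneg i]

open scoped MatrixOrder in
lemma IsHermitian.traceNorm_eq_sum_abs_eigenvalues {X : Matrix n n ℂ} (hX : X.IsHermitian) :
    traceNorm X = ∑ i, |hX.eigenvalues i| := by
  rw [traceNorm_eq_re_trace_abs, CFC.abs_eq_cfc_norm X hX.isSelfAdjoint, hX.trace_cfc,
    Complex.re_sum]
  simp only [Real.norm_eq_abs, Complex.coe_algebraMap, Complex.ofReal_re]

lemma IsHermitian.hsNorm_eq_sqrt_sum_sq_eigenvalues {X : Matrix n n ℂ} (hX : X.IsHermitian) :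
    hsNorm X = √(∑ i, hX.eigenvalues i ^ 2) := by
  rw [hsNorm, hX.eq, ← sq, ← cfc_pow_id (R := ℝ) X 2 hX.isSelfAdjoint, hX.trace_cfc, Complex.re_sum]
  simp only [Complex.coe_algebraMap, Complex.ofReal_re]

end Matrix

section SumZero

variable {ι : Type*} [Fintype ι] [DecidableEq ι] {μ : ι → ℝ}

lemma abs_le_half_sum_abs_of_sum_eq_zero (h0 : ∑ i, μ i = 0) (i : ι) :
    |μ i| ≤ (∑ j, |μ j|) / 2 := by
  have hrest : ∑ j ∈ univ.erase i, μ j = -μ i := by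
    rw [← add_sum_erase _ _ (mem_univ i)] at h0
    linarith
  have htri := abs_sum_le_sum_abs μ (univ.erase i)
  rw [hrest, abs_neg] at htri
  rw [← add_sum_erase _ _ (mem_univ i)]
  linarith

lemma abs_eq_half_sum_abs_of_sum_sq_eq (h0 : ∑ i, μ i = 0)
    (hsq : ∑ i, μ i ^ 2 = (∑ i, |μ i|) ^ 2 / 2) {i : ι} (hi : μ i ≠ 0) :
    |μ i| = (∑ j, |μ j|) / 2 := by
  set s := ∑ j, |μ j|
  have hle : ∀ j ∈ univ, μ j ^ 2 ≤ |μ j| * (s / 2) := fun j _ => by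
    rw [← sq_abs, sq]
    exact mul_le_mul_of_nonneg_left (abs_le_half_sum_abs_of_sum_eq_zero h0 j) (abs_nonneg _)
  have heq : ∑ j, μ j ^ 2 = ∑ j, |μ j| * (s / 2) := by
    rw [← sum_mul, hsq]
    ring
  have hi' := (sum_eq_sum_iff_of_le hle).mp heq i (mem_univ i)
  rw [← sq_abs, sq] at hi'
  exact mul_left_cancel₀ (abs_ne_zero.mpr hi) hi'

lemma card_support_eq_two_of_sum_sq_eq (h0 : ∑ i, μ i = 0) (hμ : μ ≠ 0)
    (hsq : ∑ i, μ i ^ 2 = (∑ i, |μ i|) ^ 2 / 2) : #{i | μ i ≠ 0} = 2 := by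
  set s := ∑ j, |μ j|
  have hs : 0 < s := by
    obtain ⟨k, hk⟩ := Function.ne_iff.mp hμ
    exact sum_pos' (fun j _ => abs_nonneg _) ⟨k, mem_univ k, abs_pos.mpr hk⟩
  have hs_eq : s = #{i | μ i ≠ 0} * (s / 2) := by
    calc s = ∑ i with μ i ≠ 0, |μ i| :=
          (sum_filter_of_ne fun i _ hi => abs_ne_zero.mp hi).symm
      _ = ∑ i with μ i ≠ 0, s / 2 := sum_congr rfl fun i hi =>
          abs_eq_half_sum_abs_of_sum_sq_eq h0 hsq (mem_filter.mp hi).2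
      _ = #{i | μ i ≠ 0} * (s / 2) := by rw [sum_const, nsmul_eq_mul]
  have hcard : (#{i | μ i ≠ 0} : ℝ) = 2 := by
    field_simp at hs_eq
    linarith
  exact_mod_cast hcard

lemma exists_pos_neg_of_card_support_eq_two (h0 : ∑ i, μ i = 0) (hcard : #{i | μ i ≠ 0} = 2) :
    ∃ t : ℝ, 0 < t ∧ ∃ i j : ι, i ≠ j ∧ μ i = t ∧ μ j = -t ∧
      ∀ l, l ≠ i → l ≠ j → μ l = 0 := by
  obtain ⟨i, j, hij, hsupp⟩ := card_eq_two.mp hcard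
  have hzero : ∀ l, l ≠ i → l ≠ j → μ l = 0 := fun l hli hlj => by
    by_contra hl
    have : l ∈ ({i, j} : Finset ι) := hsupp ▸ mem_filter.mpr ⟨mem_univ l, hl⟩
    simp_all
  have hi_mem : i ∈ ({i | μ i ≠ 0} : Finset ι) := hsupp ▸ mem_insert_self i {j}
  have hi : μ i ≠ 0 := (mem_filter.mp hi_mem).2
  have hij' : μ i + μ j = 0 := by
    rw [← sum_filter_ne_zero, hsupp, sum_pair hij] at h0
    exact h0
  rcases hi.lt_or_gt with hneg | hpos
  · exact ⟨μ j, by linarith, j, i, hij.symm, rfl, by linarith,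
      fun l hlj hli => hzero l hli hlj⟩
  · exact ⟨μ i, hpos, i, j, hij, rfl, by linarith, hzero⟩

end SumZero

theorem traceless_hermitian_hs_eq_trace_rank_two {n : ℕ}
    (X : Matrix (Fin n) (Fin n) ℂ) (hX : X.IsHermitian) (htr : X.trace = 0)
    (hne : X ≠ 0) (heq : hsNorm X = (1 / Real.sqrt 2) * traceNorm X) :
    (∃ t : ℝ, 0 < t ∧ ∃ i j : Fin n, i ≠ j ∧ hX.eigenvalues i = t ∧
      hX.eigenvalues j = -t ∧ ∀ l, l ≠ i → l ≠ j → hX.eigenvalues l = 0) ∧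
    X.rank = 2 := by
  have hsum : ∑ i, hX.eigenvalues i = 0 := by
    have := hX.trace_eq_sum_eigenvalues
    rwa [htr, ← RCLike.ofReal_sum, eq_comm, RCLike.ofReal_eq_zero] at this
  have hμ : hX.eigenvalues ≠ 0 := hX.eigenvalues_eq_zero_iff.not.mpr hne
  have hsq : ∑ i, hX.eigenvalues i ^ 2 = (∑ i, |hX.eigenvalues i|) ^ 2 / 2 := by
    rw [hX.hsNorm_eq_sqrt_sum_sq_eigenvalues, hX.traceNorm_eq_sum_abs_eigenvalues] at heq
    have hs : 0 ≤ ∑ i, |hX.eigenvalues i| := sum_nonneg fun i _ => abs_nonneg _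
    rw [← Real.sqrt_inj (sum_nonneg fun i _ => sq_nonneg _) (by positivity), heq,
      Real.sqrt_div (sq_nonneg _), Real.sqrt_sq hs]
    ring
  have hcard := card_support_eq_two_of_sum_sq_eq hsum hμ hsq
  refine ⟨exists_pos_neg_of_card_support_eq_two hsum hcard, ?_⟩
  rw [hX.rank_eq_card_non_zero_eigs, Fintype.card_subtype, hcard]
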